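/- arXiv:2601.13489 — 2 statements merged into one kernel-verified Lean document; each statement's English description precedes it below -/
import Mathlib

section
/- The item-wise regret is not in general an upper bound on the ex-post regret: there exist a number of items m ≥ 2, nonempty finite bid sets B_j ⊆ ℝ, a truthful report v with v_j ∈ B_j for all j, and a utility function U : (Fin m → ℝ) → ℝ such that Σ_{j=1}^m Rgt_j < Rgt, i.e. the item-wise regret strictly underestimates the ex-post regret. -/
/-! The two items are perfect complements: the utility `U b = b₀ b₁` is the product of the bids,
reported truthfully as `v = 0`. Any unilateral deviation leaves a zero factor, so every item-wise
regret vanishes, while deviating on both items to `1` gains `1`. -/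

open Function

theorem prod_update_zero_eq_zero {ι M : Type*} [Fintype ι] [DecidableEq ι] [Nontrivial ι]
    [CommMonoidWithZero M] (j : ι) (x : M) : ∏ i, update (0 : ι → M) j x i = 0 := by
  obtain ⟨i, hij⟩ := exists_ne j
  exact Finset.prod_eq_zero (Finset.mem_univ i) (by simp [update_of_ne hij])

theorem sum_sup'_update_sub_eq_zero {m : ℕ} {B : Fin m → Finset ℝ} (hB : ∀ j, (B j).Nonempty)
    {v : Fin m → ℝ} {U : (Fin m → ℝ) → ℝ} (hU : ∀ j x, U (update v j x) = U v) :
    ∑ j, (B j).sup' (hB j) (fun bj => U (update v j bj) - U v) = 0 := by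
  simp [hU]

/-- The item-wise regret is not in general an upper bound on the
ex-post regret: there exist `m ≥ 2`, nonempty finite bid sets, a truthful report
`v` with `v j ∈ B j` for all `j`, and a utility `U` such that
`∑ j, Rgt_j < Rgt`. -/
theorem exists_itemwise_regret_lt_regret :
    ∃ (m : ℕ) (B : Fin m → Finset ℝ) (v : Fin m → ℝ) (U : (Fin m → ℝ) → ℝ)
      (hB : ∀ j, (B j).Nonempty),
      2 ≤ m ∧ (∀ j, v j ∈ B j) ∧
      (∑ j : Fin m, (B j).sup' (hB j) (fun bj => U (Function.update v j bj) - U v))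
        <
      (Fintype.piFinset B).sup' (Fintype.piFinset_nonempty.mpr hB)
        (fun b => U b - U v) := by
  refine ⟨2, fun _ => {0, 1}, 0, fun b => ∏ i, b i, fun _ => Finset.insert_nonempty _ _, le_rfl,
    fun _ => by simp, ?_⟩
  have hjoint : (1 : Fin 2 → ℝ) ∈ Fintype.piFinset fun _ => ({0, 1} : Finset ℝ) := by simp
  rw [sum_sup'_update_sub_eq_zero _ fun j x => by simp [prod_update_zero_eq_zero]]
  refine lt_of_lt_of_le ?_ (Finset.le_sup' _ hjoint)
  simp
end

section
/- The lower bound max_j Rgt_j can be strictly loose: there exist a number of items m ≥ 2, nonempty finite bid sets B_j ⊆ ℝ, a truthful report v with v_j ∈ B_j for all j, and a utility function U : (Fin m → ℝ) → ℝ such that max_{j ∈ {1,…,m}} Rgt_j < Rgt, i.e. the optimal misreport must deviate on multiple coordinates simultaneously and no single-item deviation achieves the full regret. -/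
/-- The lower bound `max_j Rgt_j` can be strictly loose: there
exist `m ≥ 2`, nonempty finite bid sets, a truthful report `v` with `v j ∈ B j`
for all `j`, and a utility `U` such that `max_j Rgt_j < Rgt`. -/
theorem exists_max_itemwise_regret_lt_regret :
    ∃ (m : ℕ) (B : Fin m → Finset ℝ) (v : Fin m → ℝ) (U : (Fin m → ℝ) → ℝ)
      (hB : ∀ j, (B j).Nonempty) (hm : 2 ≤ m),
      (∀ j, v j ∈ B j) ∧
      ((Finset.univ : Finset (Fin m)).sup'
          (Finset.univ_nonempty_iff.mpr ⟨⟨0, by omega⟩⟩)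
          (fun j => (B j).sup' (hB j) (fun bj => U (Function.update v j bj) - U v)))
        <
      (Fintype.piFinset B).sup' (Fintype.piFinset_nonempty.mpr hB)
        (fun b => U b - U v) := by
  refine ⟨2, fun _ => {0, 1}, fun _ => 0, fun b => b 0 * b 1,
    fun j => ⟨0, by simp⟩, le_refl 2, fun j => by simp, ?_⟩
  have hL : ((Finset.univ : Finset (Fin 2)).sup'
      (Finset.univ_nonempty_iff.mpr ⟨⟨0, by omega⟩⟩)
      (fun j => ({0, 1} : Finset ℝ).sup' ⟨0, by simp⟩
        (fun bj => (Function.update (fun _ => (0:ℝ)) j bj) 0 *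
          (Function.update (fun _ => (0:ℝ)) j bj) 1 - (0:ℝ) * 0))) ≤ 0 := by
    apply Finset.sup'_le
    intro j _
    apply Finset.sup'_le
    intro bj _
    fin_cases j <;> simp [Function.update]
  have hR : (1:ℝ) ≤ (Fintype.piFinset (fun _ : Fin 2 => ({0,1} : Finset ℝ))).sup'
      (Fintype.piFinset_nonempty.mpr (fun j => ⟨0, by simp⟩))
      (fun b => b 0 * b 1 - (0:ℝ) * 0) := by
    have hmem : (fun _ : Fin 2 => (1:ℝ)) ∈
        Fintype.piFinset (fun _ : Fin 2 => ({0,1} : Finset ℝ)) := by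
      simp [Fintype.mem_piFinset]
    calc (1:ℝ) = (1:ℝ) * 1 - 0 * 0 := by ring
    _ ≤ _ := Finset.le_sup' (f := fun b : Fin 2 → ℝ => b 0 * b 1 - (0:ℝ) * 0) hmem
  calc _ ≤ (0:ℝ) := hL
  _ < 1 := one_pos
  _ ≤ _ := hR
end
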